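/- Let $F$, $F_1$, $F_2$ be distribution functions on $[0,\infty)$ with $F$ subexponential. If $\bar F_i(t)/\bar F(t)\to c_i$ as $t\to\infty$ for some constants $c_i\ge 0$, $i=1,2$, then the convolution satisfies $\overline{F_1*F_2}(t)/\bar F(t)\to c_1+c_2$ as $t\to\infty$. -/

import Mathlib

/-!
Write `Ḡ(t) = G(t, ∞)`. For laws `μ, κ` on `[0, ∞)`, `(μ * κ)‾(t) = ∫ κ̄(t - x) dμ(x)`, and the
integrand is `1` for `x > t`. Bounding it below by `κ̄(t)` on `x ≤ t` gives
`(μ * κ)‾ ≥ μ̄ + κ̄ (1 - μ̄)`, hence the lower limit `a + c` of `(μ * κ)‾ / F̄` when `μ̄ / F̄ → a`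
and `κ̄ / F̄ → c`. For the upper limit fix `C > c`, so that `κ̄ ≤ C F̄` beyond some `T`: the part
`x ≤ t - T` of the integral is at most `C ((μ * F)‾(t) - μ̄(t))` and the part `t - T < x ≤ t` at
most `μ̄(t - T) - μ̄(t)`. So if `(μ * F)‾ / F̄ → a + 1` and `F` is long-tailed
(`F̄(t - T) / F̄(t) → 1`), the upper limit is at most `a + C`.

Subexponentiality supplies both inputs: it is the case `μ = κ = F`, and splitting the same
integral at `T` shows that `F` is long-tailed. One application with `(μ, κ) = (F, F₁)` gives
`(F * F₁)‾ / F̄ → 1 + c₁`, and a second one with `(μ, κ) = (F₁, F₂)` gives the theorem.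
-/

open MeasureTheory Filter Set Topology

/-- The convolution of two measures on `ℝ`: the law of the sum of independent random
variables with the given laws. -/
noncomputable def mconv (μ ν : Measure ℝ) : Measure ℝ :=
  (μ.prod ν).map (fun p => p.1 + p.2)

open scoped ENNReal

instance isProbabilityMeasure_mconv (μ ν : Measure ℝ) [IsProbabilityMeasure μ]
    [IsProbabilityMeasure ν] : IsProbabilityMeasure (mconv μ ν) :=
  Measure.isProbabilityMeasure_map (measurable_fst.add measurable_snd).aemeasurable

lemma mconv_comm (μ ν : Measure ℝ) [SFinite μ] [SFinite ν] : mconv μ ν = mconv ν μ := by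
  have hadd : Measurable fun p : ℝ × ℝ => p.1 + p.2 := measurable_fst.add measurable_snd
  rw [mconv, mconv, ← Measure.prod_swap, Measure.map_map hadd measurable_swap]
  simp only [Function.comp_def, Prod.fst_swap, Prod.snd_swap, add_comm]

lemma measurable_measure_Ioi_sub (κ : Measure ℝ) (t : ℝ) :
    Measurable fun x => κ (Ioi (t - x)) :=
  have hanti : Antitone fun s : ℝ => κ (Ioi s) := fun _ _ h => measure_mono (Ioi_subset_Ioi h)
  hanti.measurable.comp (measurable_const.sub measurable_id)

lemma mconv_apply_Ioi (μ κ : Measure ℝ) [SFinite κ] (t : ℝ) :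
    mconv μ κ (Ioi t) = ∫⁻ x, κ (Ioi (t - x)) ∂μ := by
  have hadd : Measurable fun p : ℝ × ℝ => p.1 + p.2 := measurable_fst.add measurable_snd
  rw [mconv, Measure.map_apply hadd measurableSet_Ioi,
    Measure.prod_apply (hadd measurableSet_Ioi)]
  congr! 3 with x
  ext y
  simp [sub_lt_iff_lt_add']

lemma measure_Ioi_of_neg {κ : Measure ℝ} [IsProbabilityMeasure κ] (hκ : κ (Iio 0) = 0) {s : ℝ}
    (hs : s < 0) : κ (Ioi s) = 1 := by
  have hIci : κ (Ici 0) = 1 := by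
    rw [← compl_Iio, prob_compl_eq_one_iff measurableSet_Iio]
    exact hκ
  exact le_antisymm prob_le_one (hIci ▸ measure_mono (Ici_subset_Ioi.2 hs))

lemma mconv_apply_Ioi_eq_setLIntegral_Iic_add (μ : Measure ℝ) {κ : Measure ℝ}
    [IsProbabilityMeasure κ] (hκ : κ (Iio 0) = 0) (t : ℝ) :
    mconv μ κ (Ioi t) = (∫⁻ x in Iic t, κ (Ioi (t - x)) ∂μ) + μ (Ioi t) := by
  rw [mconv_apply_Ioi, ← lintegral_add_compl _ measurableSet_Iic, compl_Iic,
    ← setLIntegral_one]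
  congr 1
  refine setLIntegral_congr_fun measurableSet_Ioi fun x hx => ?_
  exact measure_Ioi_of_neg hκ (sub_neg.2 hx)

lemma measureReal_Iic_eq_one_sub (μ : Measure ℝ) [IsProbabilityMeasure μ] (T : ℝ) :
    μ.real (Iic T) = 1 - μ.real (Ioi T) := by
  rw [← compl_Ioi, probReal_compl_eq_one_sub measurableSet_Ioi]

lemma measureReal_Ioc_eq_sub (μ : Measure ℝ) [IsFiniteMeasure μ] {T t : ℝ} (h : T ≤ t) :
    μ.real (Ioc T t) = μ.real (Ioi T) - μ.real (Ioi t) := by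
  rw [← Ioi_sdiff_Ioi, measureReal_sdiff (Ioi_subset_Ioi h) measurableSet_Ioi]

section Convolution

variable {μ κ : Measure ℝ} [IsProbabilityMeasure κ]

lemma mconv_apply_Ioi_ge (hμ : μ (Iio 0) = 0) (hκ : κ (Iio 0) = 0) {T t : ℝ} (hTt : T ≤ t) :
    μ (Ioi t) + κ (Ioi t) * μ (Iic T) + κ (Ioi (t - T)) * μ (Ioc T t) ≤ mconv μ κ (Ioi t) := by
  have hnonneg : ∀ᵐ x ∂μ, 0 ≤ x := ae_iff.2 (by simp only [not_le]; exact hμ)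
  have hIic : κ (Ioi t) * μ (Iic T) ≤ ∫⁻ x in Iic T, κ (Ioi (t - x)) ∂μ := by
    rw [← setLIntegral_const]
    exact setLIntegral_mono_ae' measurableSet_Iic <| hnonneg.mono fun x hx _ =>
      measure_mono (Ioi_subset_Ioi (by linarith))
  have hIoc : κ (Ioi (t - T)) * μ (Ioc T t) ≤ ∫⁻ x in Ioc T t, κ (Ioi (t - x)) ∂μ := by
    rw [← setLIntegral_const]
    exact setLIntegral_mono' measurableSet_Ioc fun x hx =>
      measure_mono (Ioi_subset_Ioi (by linarith [hx.1]))
  rw [mconv_apply_Ioi_eq_setLIntegral_Iic_add μ hκ, ← Iic_union_Ioc_eq_Iic hTt,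
    lintegral_union measurableSet_Ioc (Iic_disjoint_Ioc le_rfl)]
  calc _ ≤ μ (Ioi t) + (∫⁻ x in Iic T, κ (Ioi (t - x)) ∂μ)
        + ∫⁻ x in Ioc T t, κ (Ioi (t - x)) ∂μ := by gcongr
    _ = _ := by ring

lemma mconv_apply_Ioi_add_le {ρ : Measure ℝ} [IsProbabilityMeasure ρ]
    (hκ : κ (Iio 0) = 0) (hρ : ρ (Iio 0) = 0) {C : ℝ≥0∞} {T : ℝ} (hT : 0 ≤ T)
    (hκρ : ∀ s, T ≤ s → κ (Ioi s) ≤ C * ρ (Ioi s)) (t : ℝ) :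
    mconv μ κ (Ioi t) + C * μ (Ioi t) ≤ C * mconv μ ρ (Ioi t) + μ (Ioi (t - T)) := by
  have hsplit := Iic_union_Ioc_eq_Iic (sub_le_self t hT)
  have hfar : ∫⁻ x in Iic (t - T), κ (Ioi (t - x)) ∂μ ≤ C * ∫⁻ x in Iic t, ρ (Ioi (t - x)) ∂μ :=
    calc ∫⁻ x in Iic (t - T), κ (Ioi (t - x)) ∂μ
        ≤ ∫⁻ x in Iic (t - T), C * ρ (Ioi (t - x)) ∂μ :=
          setLIntegral_mono' measurableSet_Iic fun x hx => hκρ _ (by linarith [mem_Iic.1 hx])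
      _ = C * ∫⁻ x in Iic (t - T), ρ (Ioi (t - x)) ∂μ :=
          lintegral_const_mul _ (measurable_measure_Ioi_sub ρ t)
      _ ≤ C * ∫⁻ x in Iic t, ρ (Ioi (t - x)) ∂μ := by
          gcongr
          exact sub_le_self t hT
  have hnear : (∫⁻ x in Ioc (t - T) t, κ (Ioi (t - x)) ∂μ) + μ (Ioi t) ≤ μ (Ioi (t - T)) :=
    calc (∫⁻ x in Ioc (t - T) t, κ (Ioi (t - x)) ∂μ) + μ (Ioi t)
        ≤ μ (Ioc (t - T) t) + μ (Ioi t) := by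
          gcongr
          exact (setLIntegral_mono' measurableSet_Ioc fun _ _ => prob_le_one).trans_eq
            (setLIntegral_one _)
      _ = μ (Ioi (t - T)) := by
          rw [← measure_union (Ioc_disjoint_Ioi le_rfl) measurableSet_Ioi,
            Ioc_union_Ioi_eq_Ioi (sub_le_self t hT)]
  calc mconv μ κ (Ioi t) + C * μ (Ioi t)
      = (∫⁻ x in Iic (t - T), κ (Ioi (t - x)) ∂μ)
        + ((∫⁻ x in Ioc (t - T) t, κ (Ioi (t - x)) ∂μ) + μ (Ioi t)) + C * μ (Ioi t) := by
        rw [mconv_apply_Ioi_eq_setLIntegral_Iic_add μ hκ, ← hsplit,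
          lintegral_union measurableSet_Ioc (Iic_disjoint_Ioc le_rfl)]
        ring
    _ ≤ C * (∫⁻ x in Iic t, ρ (Ioi (t - x)) ∂μ) + μ (Ioi (t - T)) + C * μ (Ioi t) := by gcongr
    _ = C * mconv μ ρ (Ioi t) + μ (Ioi (t - T)) := by
        rw [mconv_apply_Ioi_eq_setLIntegral_Iic_add μ hρ]
        ring

variable [IsProbabilityMeasure μ]

lemma measureReal_mconv_Ioi_ge (hμ : μ (Iio 0) = 0) (hκ : κ (Iio 0) = 0) {T t : ℝ}
    (hTt : T ≤ t) :
    μ.real (Ioi t) + κ.real (Ioi t) * (1 - μ.real (Ioi T))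
      + κ.real (Ioi (t - T)) * (μ.real (Ioi T) - μ.real (Ioi t)) ≤ (mconv μ κ).real (Ioi t) := by
  have h := ENNReal.toReal_mono (measure_ne_top _ _) (mconv_apply_Ioi_ge hμ hκ hTt)
  rw [ENNReal.toReal_add (by finiteness) (by finiteness),
    ENNReal.toReal_add (by finiteness) (by finiteness), ENNReal.toReal_mul, ENNReal.toReal_mul]
    at h
  simpa only [← measureReal_def, measureReal_Iic_eq_one_sub, measureReal_Ioc_eq_sub μ hTt]
    using h

lemma measureReal_mconv_Ioi_add_le {ρ : Measure ℝ} [IsProbabilityMeasure ρ]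
    (hκ : κ (Iio 0) = 0) (hρ : ρ (Iio 0) = 0) {C : ℝ} (hC : 0 ≤ C) {T : ℝ} (hT : 0 ≤ T)
    (hκρ : ∀ s, T ≤ s → κ.real (Ioi s) ≤ C * ρ.real (Ioi s)) (t : ℝ) :
    (mconv μ κ).real (Ioi t) + C * μ.real (Ioi t)
      ≤ C * (mconv μ ρ).real (Ioi t) + μ.real (Ioi (t - T)) := by
  have hκρ' : ∀ s, T ≤ s → κ (Ioi s) ≤ ENNReal.ofReal C * ρ (Ioi s) := fun s hs => by
    rw [← ofReal_measureReal, ← ofReal_measureReal (μ := ρ), ← ENNReal.ofReal_mul hC]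
    exact ENNReal.ofReal_le_ofReal (hκρ s hs)
  have h := ENNReal.toReal_mono (by finiteness) (mconv_apply_Ioi_add_le (μ := μ) hκ hρ hT hκρ' t)
  rw [ENNReal.toReal_add (by finiteness) (by finiteness),
    ENNReal.toReal_add (by finiteness) (by finiteness), ENNReal.toReal_mul, ENNReal.toReal_mul,
    ENNReal.toReal_ofReal hC] at h
  simpa only [← measureReal_def] using h

end Convolution

lemma tendsto_measureReal_Ioi_atTop (μ : Measure ℝ) [IsFiniteMeasure μ] :
    Tendsto (fun t => μ.real (Ioi t)) atTop (𝓝 0) := by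
  have hempty : ⋂ t : ℝ, Ioi t = ∅ := iInter_eq_empty_iff.2 fun x => ⟨x, lt_irrefl x⟩
  have h := tendsto_measure_iInter_atTop (μ := μ)
    (fun t : ℝ => measurableSet_Ioi.nullMeasurableSet) antitone_Ioi ⟨0, measure_ne_top μ _⟩
  rw [hempty, measure_empty] at h
  exact (ENNReal.tendsto_toReal ENNReal.zero_ne_top).comp h

section Asymptotics

variable {μ κ ν : Measure ℝ}

/-- A vanishing tail would make the ratio eventually `f t / 0 = 0`. -/
lemma measureReal_Ioi_pos_of_tendsto_div [IsFiniteMeasure ν] {f : ℝ → ℝ} {L : ℝ} (hL : L ≠ 0)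
    (h : Tendsto (fun t => f t / ν.real (Ioi t)) atTop (𝓝 L)) (t₀ : ℝ) :
    0 < ν.real (Ioi t₀) := by
  refine measureReal_nonneg.lt_of_ne fun h₀ => hL ?_
  refine tendsto_nhds_unique h (tendsto_const_nhds.congr' ?_)
  filter_upwards [eventually_ge_atTop t₀] with t ht
  have : ν.real (Ioi t) = 0 :=
    le_antisymm (h₀ ▸ measureReal_mono (Ioi_subset_Ioi ht)) measureReal_nonneg
  rw [this, div_zero]

lemma tendsto_measureReal_Ioi_sub_div_of_tendsto_mconv_self [IsProbabilityMeasure ν]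
    (hν : ν (Iio 0) = 0)
    (hsub : Tendsto (fun t => (mconv ν ν).real (Ioi t) / ν.real (Ioi t)) atTop (𝓝 2))
    {T : ℝ} (hT : 0 ≤ T) :
    Tendsto (fun t => ν.real (Ioi (t - T)) / ν.real (Ioi t)) atTop (𝓝 1) := by
  have hpos := measureReal_Ioi_pos_of_tendsto_div two_ne_zero hsub
  have htail := tendsto_measureReal_Ioi_atTop ν
  -- `measureReal_mconv_Ioi_ge` for `μ = κ = ν`, solved for `ν.real (Ioi (t - T)) / ν.real (Ioi t)`
  have hbound : Tendsto (fun t => ((mconv ν ν).real (Ioi t) / ν.real (Ioi t) - 2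
      + ν.real (Ioi T)) / (ν.real (Ioi T) - ν.real (Ioi t))) atTop (𝓝 1) := by
    have h := ((hsub.sub_const 2).add_const (ν.real (Ioi T))).div
      (htail.const_sub (ν.real (Ioi T))) (by simpa using (hpos T).ne')
    rwa [sub_self, zero_add, sub_zero, div_self (hpos T).ne'] at h
  refine tendsto_of_tendsto_of_tendsto_of_le_of_le' tendsto_const_nhds hbound
    (Eventually.of_forall fun t => (one_le_div (hpos t)).2 ?_) ?_
  · exact measureReal_mono (Ioi_subset_Ioi (by linarith))
  filter_upwards [eventually_ge_atTop T, htail.eventually (gt_mem_nhds (hpos T))]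
    with t hTt htT
  have h := measureReal_mconv_Ioi_ge hν hν hTt
  rw [le_div_iff₀ (sub_pos.2 htT)]
  have := (hpos t).ne'
  field_simp
  linarith

lemma tendsto_measureReal_Ioi_sub_div (hpos : ∀ t, 0 < ν.real (Ioi t)) {T a : ℝ}
    (hlong : Tendsto (fun t => ν.real (Ioi (t - T)) / ν.real (Ioi t)) atTop (𝓝 1))
    (ha : Tendsto (fun t => μ.real (Ioi t) / ν.real (Ioi t)) atTop (𝓝 a)) :
    Tendsto (fun t => μ.real (Ioi (t - T)) / ν.real (Ioi t)) atTop (𝓝 a) := by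
  have h := (ha.comp (tendsto_atTop_add_const_right atTop (-T) tendsto_id)).mul hlong
  rw [mul_one] at h
  refine h.congr fun t => ?_
  simp only [Function.comp_apply, id, ← sub_eq_add_neg]
  exact div_mul_div_cancel₀ (hpos (t - T)).ne'

lemma eventually_lt_measureReal_mconv_Ioi_div [IsProbabilityMeasure μ] [IsProbabilityMeasure κ]
    (hμ : μ (Iio 0) = 0) (hκ : κ (Iio 0) = 0) {a c : ℝ}
    (ha : Tendsto (fun t => μ.real (Ioi t) / ν.real (Ioi t)) atTop (𝓝 a))
    (hc : Tendsto (fun t => κ.real (Ioi t) / ν.real (Ioi t)) atTop (𝓝 c))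
    {b : ℝ} (hb : b < a + c) :
    ∀ᶠ t in atTop, b < (mconv μ κ).real (Ioi t) / ν.real (Ioi t) := by
  have hlow : Tendsto (fun t => μ.real (Ioi t) / ν.real (Ioi t)
      + κ.real (Ioi t) / ν.real (Ioi t) * (1 - μ.real (Ioi t))) atTop (𝓝 (a + c)) := by
    simpa using ha.add (hc.mul ((tendsto_measureReal_Ioi_atTop μ).const_sub 1))
  filter_upwards [hlow.eventually (lt_mem_nhds hb)] with t ht
  refine ht.trans_le ?_
  have h := measureReal_mconv_Ioi_ge hμ hκ (le_refl t)
  rw [sub_self, sub_self, mul_zero, add_zero] at h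
  calc μ.real (Ioi t) / ν.real (Ioi t) + κ.real (Ioi t) / ν.real (Ioi t) * (1 - μ.real (Ioi t))
      = (μ.real (Ioi t) + κ.real (Ioi t) * (1 - μ.real (Ioi t))) / ν.real (Ioi t) := by ring
    _ ≤ (mconv μ κ).real (Ioi t) / ν.real (Ioi t) := by gcongr

lemma eventually_measureReal_mconv_Ioi_div_lt [IsProbabilityMeasure μ] [IsProbabilityMeasure κ]
    [IsProbabilityMeasure ν]
    (hκ : κ (Iio 0) = 0) (hν : ν (Iio 0) = 0) (hpos : ∀ t, 0 < ν.real (Ioi t))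
    (hlong : ∀ T, 0 ≤ T → Tendsto (fun t => ν.real (Ioi (t - T)) / ν.real (Ioi t)) atTop (𝓝 1))
    {a c : ℝ} (ha : Tendsto (fun t => μ.real (Ioi t) / ν.real (Ioi t)) atTop (𝓝 a))
    (hc : Tendsto (fun t => κ.real (Ioi t) / ν.real (Ioi t)) atTop (𝓝 c))
    (hμν : Tendsto (fun t => (mconv μ ν).real (Ioi t) / ν.real (Ioi t)) atTop (𝓝 (a + 1)))
    {b : ℝ} (hb : a + c < b) :
    ∀ᶠ t in atTop, (mconv μ κ).real (Ioi t) / ν.real (Ioi t) < b := by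
  have hc₀ : 0 ≤ c := ge_of_tendsto' hc fun t => div_nonneg measureReal_nonneg measureReal_nonneg
  set C := c + (b - a - c) / 2 with hC
  obtain ⟨T₀, hT₀⟩ := eventually_atTop.1 (hc.eventually (gt_mem_nhds (by linarith : c < C)))
  set T := max T₀ 0
  have hκν : ∀ s, T ≤ s → κ.real (Ioi s) ≤ C * ν.real (Ioi s) := fun s hs =>
    ((div_lt_iff₀ (hpos s)).1 (hT₀ s (le_of_max_le_left hs))).le
  have hup : Tendsto (fun t => C * ((mconv μ ν).real (Ioi t) / ν.real (Ioi t))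
      - C * (μ.real (Ioi t) / ν.real (Ioi t)) + μ.real (Ioi (t - T)) / ν.real (Ioi t))
      atTop (𝓝 (C * (a + 1) - C * a + a)) :=
    ((hμν.const_mul C).sub (ha.const_mul C)).add
      (tendsto_measureReal_Ioi_sub_div hpos (hlong T (le_max_right _ _)) ha)
  rw [show C * (a + 1) - C * a + a = C + a by ring] at hup
  filter_upwards [hup.eventually (gt_mem_nhds (by linarith : C + a < b))] with t ht
  refine lt_of_le_of_lt ?_ ht
  have h := measureReal_mconv_Ioi_add_le (μ := μ) hκ hν (by linarith) (le_max_right _ _) hκν t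
  calc (mconv μ κ).real (Ioi t) / ν.real (Ioi t)
      ≤ (C * (mconv μ ν).real (Ioi t) - C * μ.real (Ioi t) + μ.real (Ioi (t - T)))
        / ν.real (Ioi t) := by gcongr; linarith
    _ = _ := by ring

lemma tendsto_measureReal_mconv_Ioi_div [IsProbabilityMeasure μ] [IsProbabilityMeasure κ]
    [IsProbabilityMeasure ν] (hμ : μ (Iio 0) = 0) (hκ : κ (Iio 0) = 0) (hν : ν (Iio 0) = 0)
    (hpos : ∀ t, 0 < ν.real (Ioi t))
    (hlong : ∀ T, 0 ≤ T → Tendsto (fun t => ν.real (Ioi (t - T)) / ν.real (Ioi t)) atTop (𝓝 1))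
    {a c : ℝ} (ha : Tendsto (fun t => μ.real (Ioi t) / ν.real (Ioi t)) atTop (𝓝 a))
    (hc : Tendsto (fun t => κ.real (Ioi t) / ν.real (Ioi t)) atTop (𝓝 c))
    (hμν : Tendsto (fun t => (mconv μ ν).real (Ioi t) / ν.real (Ioi t)) atTop (𝓝 (a + 1))) :
    Tendsto (fun t => (mconv μ κ).real (Ioi t) / ν.real (Ioi t)) atTop (𝓝 (a + c)) :=
  tendsto_order.2 ⟨fun _ hb => eventually_lt_measureReal_mconv_Ioi_div hμ hκ ha hc hb,
    fun _ hb => eventually_measureReal_mconv_Ioi_div_lt hκ hν hpos hlong ha hc hμν hb⟩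

end Asymptotics

theorem stmt15_general (ν ν1 ν2 : Measure ℝ) [IsProbabilityMeasure ν]
    [IsProbabilityMeasure ν1] [IsProbabilityMeasure ν2]
    (hsupp : ν (Set.Iio (0:ℝ)) = 0) (hsupp1 : ν1 (Set.Iio (0:ℝ)) = 0)
    (hsupp2 : ν2 (Set.Iio (0:ℝ)) = 0)
    (hsubexp : Tendsto (fun t : ℝ =>
        ((mconv ν ν) (Set.Ioi t)).toReal / (ν (Set.Ioi t)).toReal) atTop (nhds 2))
    (c1 c2 : ℝ)
    (h1 : Tendsto (fun t : ℝ =>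
        (ν1 (Set.Ioi t)).toReal / (ν (Set.Ioi t)).toReal) atTop (nhds c1))
    (h2 : Tendsto (fun t : ℝ =>
        (ν2 (Set.Ioi t)).toReal / (ν (Set.Ioi t)).toReal) atTop (nhds c2)) :
    Tendsto (fun t : ℝ =>
        ((mconv ν1 ν2) (Set.Ioi t)).toReal / (ν (Set.Ioi t)).toReal)
      atTop (nhds (c1 + c2)) := by
  have hpos := measureReal_Ioi_pos_of_tendsto_div two_ne_zero hsubexp
  have hlong := fun T (hT : 0 ≤ T) =>
    tendsto_measureReal_Ioi_sub_div_of_tendsto_mconv_self hsupp hsubexp hT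
  have hself : Tendsto (fun t => ν.real (Ioi t) / ν.real (Ioi t)) atTop (𝓝 1) :=
    tendsto_const_nhds.congr fun t => (div_self (hpos t).ne').symm
  have hνν1 : Tendsto (fun t => (mconv ν ν1).real (Ioi t) / ν.real (Ioi t)) atTop (𝓝 (1 + c1)) :=
    tendsto_measureReal_mconv_Ioi_div hsupp hsupp1 hsupp hpos hlong hself h1
      (by rwa [one_add_one_eq_two])
  rw [mconv_comm, add_comm] at hνν1
  exact tendsto_measureReal_mconv_Ioi_div hsupp1 hsupp2 hsupp hpos hlong h1 h2 hνν1

/-- If `F` is subexponential and `F̄_i(t)/F̄(t) → c_i` (`i = 1,2`), then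
`(F_1 * F_2)-bar (t)/F̄(t) → c_1 + c_2`. -/
theorem stmt15 (ν ν1 ν2 : Measure ℝ) [IsProbabilityMeasure ν]
    [IsProbabilityMeasure ν1] [IsProbabilityMeasure ν2]
    (hsupp : ν (Set.Iio (0:ℝ)) = 0) (hsupp1 : ν1 (Set.Iio (0:ℝ)) = 0)
    (hsupp2 : ν2 (Set.Iio (0:ℝ)) = 0)
    (hsubexp : Tendsto (fun t : ℝ =>
        ((mconv ν ν) (Set.Ioi t)).toReal / (ν (Set.Ioi t)).toReal) atTop (nhds 2))
    (c1 c2 : ℝ) (hc1 : 0 ≤ c1) (hc2 : 0 ≤ c2)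
    (h1 : Tendsto (fun t : ℝ =>
        (ν1 (Set.Ioi t)).toReal / (ν (Set.Ioi t)).toReal) atTop (nhds c1))
    (h2 : Tendsto (fun t : ℝ =>
        (ν2 (Set.Ioi t)).toReal / (ν (Set.Ioi t)).toReal) atTop (nhds c2)) :
    Tendsto (fun t : ℝ =>
        ((mconv ν1 ν2) (Set.Ioi t)).toReal / (ν (Set.Ioi t)).toReal)
      atTop (nhds (c1 + c2)) :=
  stmt15_general ν ν1 ν2 hsupp hsupp1 hsupp2 hsubexp c1 c2 h1 h2
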